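/- Let h(x,y,z) ∈ ℝ[x,y,z] be a sum-of-squares polynomial of degree at most 2 in x = (x₁,…,x_d), y = (y₁,…,y_u), z = (z₁,…,z_v) in which the coefficient of every monomial y_i z_j (1 ≤ i ≤ u, 1 ≤ j ≤ v) is zero. Then h can be written in the triangular form h = Σ_{i=1}^u a_i (y_i − l_i(x, y_{i+1},…,y_u))² + Σ_{j=1}^v a_{u+j} (z_j − l_{u+j}(x, z_{j+1},…,z_v))² + Σ_{k=1}^d a_{u+v+k} (x_k − l_{u+v+k}(x_{k+1},…,x_d))² + a_{u+v+d+1}, where a₁,…,a_{u+v+d+1} ≥ 0 and each l_m is an affine function of the indicated variables (l_{u+v+d} being a constant). -/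

import Mathlib

/-
Complete the square successively in `y₁, …, y_u`, then `z₁, …, z_v`, then `x₁, …, x_d`.
In a variable `w`, a nonnegative quadratic reads `p = c w² + q w + r₀` with `q` affine and `q`,
`r₀` free of `w`. Nonnegativity along the `w`-direction forces `c ≥ 0`, and `q = 0` if `c = 0`,
so `p = c (w + q / 2c)² + (r₀ - q² / 4c)`, the remainder being again a nonnegative quadratic,
now free of `w`. The form `q` only involves variables sharing a monomial of `p` with `w`, and the
new monomials of the remainder only involve variables of `q`. Hence, if no monomial involves both
a `y`- and a `z`-variable, this persists while the `y`-variables are eliminated, and their affine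
forms never involve a `z`-variable. Once every variable is eliminated the remainder is a
nonnegative constant.
-/

open MvPolynomial

/-- A polynomial is a sum of squares. -/
def IsSOS {σ : Type*} (p : MvPolynomial σ ℝ) : Prop :=
  ∃ (k : ℕ) (q : Fin k → MvPolynomial σ ℝ), p = ∑ i, (q i) ^ 2

section Quadratic

variable {K : Type*} [Field K] [LinearOrder K] [IsStrictOrderedRing K] {a b c : K}

theorem nonneg_of_forall_quadratic_nonneg (h : ∀ t : K, 0 ≤ a * t ^ 2 + b * t + c) :
    0 ≤ a := by
  have hd : b ^ 2 - 4 * a * c ≤ 0 := discrim_le_zero fun t => by simpa [sq] using h t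
  have hc : 0 ≤ c := by simpa using h 0
  by_contra! ha
  have hb : b = 0 := by nlinarith [sq_nonneg b, mul_nonpos_of_nonpos_of_nonneg ha.le hc]
  have hc' : c ≤ 0 := by nlinarith
  linarith [h 1]

theorem eq_zero_of_forall_linear_nonneg (h : ∀ t : K, 0 ≤ b * t + c) : b = 0 := by
  have hd : b ^ 2 - 4 * 0 * c ≤ 0 := discrim_le_zero fun t => by simpa using h t
  nlinarith [sq_nonneg b]

end Quadratic

theorem IsSOS.eval_nonneg {σ : Type*} {p : MvPolynomial σ ℝ} (hp : IsSOS p) (x : σ → ℝ) :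
    0 ≤ eval x p := by
  obtain ⟨k, q, rfl⟩ := hp
  simp only [map_sum, map_pow]
  exact Finset.sum_nonneg fun i _ => sq_nonneg _

namespace MvPolynomial

variable {σ R : Type*}

section CoeffInX

variable [CommSemiring R] (w : σ) (k : ℕ)

/-- The coefficient of `X w ^ k` in `p`, viewed as a polynomial in `X w` whose coefficients are
polynomials in the other variables. -/
noncomputable def coeffInX (p : MvPolynomial σ R) : MvPolynomial σ R :=
  (p.divMonomial (Finsupp.single w k)).modMonomial (Finsupp.single w 1)

variable {w k}

theorem coeff_coeffInX (p : MvPolynomial σ R) (m : σ →₀ ℕ) :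
    coeff m (coeffInX w k p) = if m w = 0 then coeff (Finsupp.single w k + m) p else 0 := by
  split_ifs with hm
  · rw [coeffInX, coeff_modMonomial_of_not_le _ (by simp [Finsupp.single_le_iff, hm]),
      coeff_divMonomial]
  · exact coeff_modMonomial_of_le _ (by simpa [Finsupp.single_le_iff, Nat.one_le_iff_ne_zero])

theorem apply_eq_zero_of_mem_support_coeffInX {p : MvPolynomial σ R} {m : σ →₀ ℕ}
    (hm : m ∈ (coeffInX w k p).support) : m w = 0 := by
  by_contra h
  simp [coeff_coeffInX, h] at hm

theorem single_add_mem_support_of_mem_support_coeffInX {p : MvPolynomial σ R} {m : σ →₀ ℕ}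
    (hm : m ∈ (coeffInX w k p).support) : Finsupp.single w k + m ∈ p.support := by
  have hmw := apply_eq_zero_of_mem_support_coeffInX hm
  simpa [coeff_coeffInX, hmw] using hm

theorem totalDegree_coeffInX_le {p : MvPolynomial σ R} {n : ℕ} (hp : p.totalDegree ≤ n + k) :
    (coeffInX w k p).totalDegree ≤ n := by
  refine Finset.sup_le fun m hm => ?_
  have := (le_totalDegree (single_add_mem_support_of_mem_support_coeffInX hm)).trans hp
  change Finsupp.degree (Finsupp.single w k + m) ≤ n + k at this
  change Finsupp.degree m ≤ n
  rw [map_add, Finsupp.degree_single] at this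
  omega

theorem notMem_vars_coeffInX (p : MvPolynomial σ R) : w ∉ (coeffInX w k p).vars := by
  rw [mem_vars_iff_mem_support]
  rintro ⟨m, hm, hwm⟩
  exact Finsupp.mem_support_iff.1 hwm (apply_eq_zero_of_mem_support_coeffInX hm)

theorem vars_coeffInX_subset (p : MvPolynomial σ R) : (coeffInX w k p).vars ⊆ p.vars := by
  intro v hv
  obtain ⟨m, hm, hvm⟩ := (mem_vars_iff_mem_support v).1 hv
  refine (mem_vars_iff_mem_support v).2
    ⟨_, single_add_mem_support_of_mem_support_coeffInX hm, ?_⟩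
  rw [Finsupp.mem_support_iff] at hvm ⊢
  simp [hvm]

theorem divMonomial_divMonomial_single_eq_C {p : MvPolynomial σ R} (hp : p.totalDegree ≤ 2) :
    (p.divMonomial (Finsupp.single w 1)).divMonomial (Finsupp.single w 1) =
      C (coeff (Finsupp.single w 2) p) := by
  classical
  ext m
  rw [coeff_divMonomial, coeff_divMonomial, ← add_assoc, ← Finsupp.single_add, coeff_C]
  split_ifs with hm
  · rw [← hm, add_zero]
  · refine coeff_eq_zero_of_totalDegree_lt (hp.trans_lt ?_)
    change 2 < Finsupp.degree (Finsupp.single w (1 + 1) + m)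
    have := (Finsupp.degree_eq_zero_iff m).not.2 (Ne.symm hm)
    rw [map_add, Finsupp.degree_single]
    omega

theorem eq_C_mul_X_sq_add_X_mul_add {p : MvPolynomial σ R} (hp : p.totalDegree ≤ 2) :
    p = C (coeff (Finsupp.single w 2) p) * X w ^ 2 + X w * coeffInX w 1 p + coeffInX w 0 p := by
  have h0 := divMonomial_add_modMonomial_single p w
  have h1 := divMonomial_add_modMonomial_single (p.divMonomial (Finsupp.single w 1)) w
  rw [divMonomial_divMonomial_single_eq_C hp] at h1
  rw [coeffInX, coeffInX, Finsupp.single_zero, divMonomial_zero]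
  nth_rewrite 1 [← h0, ← h1]
  ring

end CoeffInX

theorem eval_update_of_notMem_vars [CommSemiring R] [DecidableEq σ] {p : MvPolynomial σ R}
    {w : σ} (hw : w ∉ p.vars) (x : σ → R) (t : R) :
    eval (Function.update x w t) p = eval x p := by
  refine eval₂_congr _ _ _ fun {v m} hv hm => Function.update_of_ne ?_ _ _
  rintro rfl
  exact hw ((mem_vars_iff_mem_support v).2 ⟨m, mem_support_iff.2 hm, hv⟩)

theorem vars_C_mul_subset [CommSemiring R] [DecidableEq σ] (a : R) (p : MvPolynomial σ R) :
    (C a * p).vars ⊆ p.vars :=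
  (vars_mul _ _).trans (by rw [vars_C, Finset.empty_union])

structure IsNonnegQuadratic (p : MvPolynomial σ ℝ) : Prop where
  totalDegree_le : p.totalDegree ≤ 2
  nonneg : ∀ x, 0 ≤ eval x p

section CompleteSquare

variable (w : σ) (p : MvPolynomial σ ℝ)

/- When the coefficient `c` of `X w ^ 2` vanishes, `0⁻¹ = 0` makes these `0` and
`coeffInX w 0 p`; the identity `p = c (X w - squareVertex w p) ^ 2 + squareRemainder w p`
still holds for nonnegative `p`, since then `coeffInX w 1 p = 0`. -/
noncomputable def squareVertex : MvPolynomial σ ℝ :=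
  C (-(2 * coeff (Finsupp.single w 2) p)⁻¹) * coeffInX w 1 p

noncomputable def squareRemainder : MvPolynomial σ ℝ :=
  coeffInX w 0 p - C (4 * coeff (Finsupp.single w 2) p)⁻¹ * coeffInX w 1 p ^ 2

variable {w p}

theorem totalDegree_squareVertex_le (hp : p.totalDegree ≤ 2) :
    (squareVertex w p).totalDegree ≤ 1 :=
  (totalDegree_mul _ _).trans <| by
    rw [totalDegree_C, zero_add]
    exact totalDegree_coeffInX_le (k := 1) (n := 1) hp

theorem totalDegree_squareRemainder_le (hp : p.totalDegree ≤ 2) :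
    (squareRemainder w p).totalDegree ≤ 2 := by
  have h₀ := totalDegree_coeffInX_le (w := w) (k := 0) (n := 2) hp
  have h₁ := totalDegree_coeffInX_le (w := w) (k := 1) (n := 1) hp
  refine (totalDegree_sub _ _).trans (max_le h₀ ((totalDegree_mul _ _).trans ?_))
  have := totalDegree_pow (coeffInX w 1 p) 2
  simp only [totalDegree_C, zero_add]
  omega

variable [DecidableEq σ]

theorem vars_squareVertex_subset : (squareVertex w p).vars ⊆ (coeffInX w 1 p).vars :=
  vars_C_mul_subset _ _

theorem vars_squareRemainder_subset :
    (squareRemainder w p).vars ⊆ (coeffInX w 0 p).vars ∪ (coeffInX w 1 p).vars :=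
  (vars_sub_subset _).trans <| Finset.union_subset_union subset_rfl <|
    (vars_C_mul_subset _ _).trans (vars_pow _ _)

theorem notMem_vars_squareVertex : w ∉ (squareVertex w p).vars :=
  fun h => notMem_vars_coeffInX _ (vars_squareVertex_subset h)

theorem notMem_vars_squareRemainder : w ∉ (squareRemainder w p).vars := fun h => by
  rcases Finset.mem_union.1 (vars_squareRemainder_subset h) with h | h <;>
    exact notMem_vars_coeffInX _ h

theorem eval_update_eq_quadratic (hp : p.totalDegree ≤ 2) (x : σ → ℝ) (t : ℝ) :
    eval (Function.update x w t) p = coeff (Finsupp.single w 2) p * t ^ 2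
      + eval x (coeffInX w 1 p) * t + eval x (coeffInX w 0 p) := by
  conv_lhs => rw [eq_C_mul_X_sq_add_X_mul_add (w := w) hp]
  simp only [map_add, map_mul, map_pow, eval_C, eval_X, Function.update_self,
    eval_update_of_notMem_vars (notMem_vars_coeffInX _)]
  ring

namespace IsNonnegQuadratic

theorem coeff_single_two_nonneg (hp : IsNonnegQuadratic p) (w : σ) :
    0 ≤ coeff (Finsupp.single w 2) p :=
  nonneg_of_forall_quadratic_nonneg (b := eval 0 (coeffInX w 1 p)) (c := eval 0 (coeffInX w 0 p))
    fun t => eval_update_eq_quadratic hp.totalDegree_le 0 t ▸ hp.nonneg _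

theorem coeffInX_one_eq_zero (hp : IsNonnegQuadratic p)
    (hw : coeff (Finsupp.single w 2) p = 0) : coeffInX w 1 p = 0 :=
  funext fun x => eq_zero_of_forall_linear_nonneg (c := eval x (coeffInX w 0 p)) fun t => by
    simpa [eval_update_eq_quadratic hp.totalDegree_le, hw] using hp.nonneg (Function.update x w t)

theorem eq_C_mul_X_sub_squareVertex_sq_add (hp : IsNonnegQuadratic p) (w : σ) :
    p = C (coeff (Finsupp.single w 2) p) * (X w - squareVertex w p) ^ 2 + squareRemainder w p := by
  nth_rewrite 1 [eq_C_mul_X_sq_add_X_mul_add (w := w) hp.totalDegree_le]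
  rw [squareVertex, squareRemainder]
  rcases eq_or_ne (coeff (Finsupp.single w 2) p) 0 with hc | hc
  · simp [hc, hp.coeffInX_one_eq_zero hc]
  · generalize coeff (Finsupp.single w 2) p = c at hc ⊢
    have h₁ : C c * C (-(2 * c)⁻¹) * 2 = (-1 : MvPolynomial σ ℝ) := by
      rw [← C_mul, ← map_ofNat C 2, ← C_mul, ← C_1, ← C_neg]
      congr 1
      field_simp
    have h₂ : C c * C (-(2 * c)⁻¹) ^ 2 = (C (4 * c)⁻¹ : MvPolynomial σ ℝ) := by
      rw [← C_pow, ← C_mul]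
      congr 1
      field_simp
      ring
    linear_combination (X w * coeffInX w 1 p) * h₁ - coeffInX w 1 p ^ 2 * h₂

end IsNonnegQuadratic

theorem isNonnegQuadratic_squareRemainder (hp : IsNonnegQuadratic p) (w : σ) :
    IsNonnegQuadratic (squareRemainder w p) where
  totalDegree_le := totalDegree_squareRemainder_le hp.totalDegree_le
  nonneg x := by
    set y := Function.update x w (eval x (squareVertex w p))
    calc 0 ≤ eval y p := hp.nonneg y
      _ = eval y (C (coeff (Finsupp.single w 2) p) * (X w - squareVertex w p) ^ 2
            + squareRemainder w p) := by
        rw [← hp.eq_C_mul_X_sub_squareVertex_sq_add w]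
      _ = eval x (squareRemainder w p) := by
        simp [y, eval_update_of_notMem_vars notMem_vars_squareVertex,
          eval_update_of_notMem_vars notMem_vars_squareRemainder]

end CompleteSquare

section NoMixedTerms

variable [CommSemiring R] {A A' B : Set σ} {p : MvPolynomial σ R}

def NoMixedTerms (A B : Set σ) (p : MvPolynomial σ R) : Prop :=
  ∀ m ∈ p.support, ∀ a ∈ A, ∀ b ∈ B, m a = 0 ∨ m b = 0

theorem noMixedTerms_of_forall_notMem_vars (h : ∀ b ∈ B, b ∉ p.vars) : NoMixedTerms A B p :=
  fun _ hm _ _ b hb => Or.inr (mem_support_notMem_vars_zero hm (h b hb))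

theorem NoMixedTerms.mono_left (h : NoMixedTerms A B p) (hA : A' ⊆ A) : NoMixedTerms A' B p :=
  fun m hm a ha b hb => h m hm a (hA ha) b hb

theorem NoMixedTerms.sub {R : Type*} [CommRing R] [DecidableEq σ] {p q : MvPolynomial σ R}
    (hp : NoMixedTerms A B p) (hq : NoMixedTerms A B q) : NoMixedTerms A B (p - q) := by
  intro m hm
  rcases Finset.mem_union.1 (support_sub σ p q hm) with h | h
  exacts [hp m h, hq m h]

theorem noMixedTerms_coeffInX (h : NoMixedTerms A B p) (w : σ) (k : ℕ) :
    NoMixedTerms A B (coeffInX w k p) := by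
  intro m hm a ha b hb
  have := h _ (single_add_mem_support_of_mem_support_coeffInX hm) a ha b hb
  simp only [Finsupp.add_apply] at this
  omega

theorem NoMixedTerms.notMem_vars_coeffInX (h : NoMixedTerms A B p) {w : σ} (hw : w ∈ A) {k : ℕ}
    (hk : k ≠ 0) {b : σ} (hb : b ∈ B) : b ∉ (coeffInX w k p).vars := by
  intro hbv
  obtain ⟨m, hm, hbm⟩ := (mem_vars_iff_mem_support b).1 hbv
  have hmw := apply_eq_zero_of_mem_support_coeffInX hm
  have := h _ (single_add_mem_support_of_mem_support_coeffInX hm) w hw b hb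
  rw [Finsupp.mem_support_iff] at hbm
  simp only [Finsupp.add_apply, Finsupp.single_eq_same, hmw] at this
  omega

theorem noMixedTerms_of_coeff_eq_zero (hp : p.totalDegree ≤ 2) (hAB : Disjoint A B)
    (h : ∀ a ∈ A, ∀ b ∈ B, coeff (Finsupp.single a 1 + Finsupp.single b 1) p = 0) :
    NoMixedTerms A B p := by
  classical
  intro m hm a ha b hb
  by_contra! hab
  have hne : a ≠ b := by
    rintro rfl
    exact Set.disjoint_left.1 hAB ha hb
  have hle : Finsupp.single a 1 + Finsupp.single b 1 ≤ m := fun v => by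
    simp only [Finsupp.add_apply, Finsupp.single_apply]
    split_ifs <;> subst_vars <;> first | exact absurd rfl hne | omega
  obtain ⟨m', rfl⟩ := exists_add_of_le hle
  have hm' : Finsupp.degree m' = 0 := by
    have := (le_totalDegree hm).trans hp
    change Finsupp.degree (Finsupp.single a 1 + Finsupp.single b 1 + m') ≤ 2 at this
    simp only [map_add, Finsupp.degree_single] at this
    omega
  rw [Finsupp.degree_eq_zero_iff] at hm'
  rw [hm', add_zero] at hm
  exact mem_support_iff.1 hm (h a ha b hb)

variable [DecidableEq σ] {p : MvPolynomial σ ℝ}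

theorem NoMixedTerms.notMem_vars_squareVertex (h : NoMixedTerms A B p) {w : σ} (hw : w ∈ A)
    {b : σ} (hb : b ∈ B) : b ∉ (squareVertex w p).vars :=
  fun hbv => h.notMem_vars_coeffInX hw one_ne_zero hb (vars_squareVertex_subset hbv)

theorem noMixedTerms_squareRemainder (h : NoMixedTerms A B p) {w : σ} (hw : w ∈ A) :
    NoMixedTerms A B (squareRemainder w p) :=
  (noMixedTerms_coeffInX h w 0).sub <| noMixedTerms_of_forall_notMem_vars fun _ hb hbv =>
    h.notMem_vars_coeffInX hw one_ne_zero hb (((vars_C_mul_subset _ _).trans (vars_pow _ _)) hbv)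

end NoMixedTerms

theorem IsNonnegQuadratic.exists_eq_sum_sq_add [DecidableEq σ] {n : ℕ} (g : Fin n → σ)
    {B : Set σ} {p : MvPolynomial σ ℝ} (hp : IsNonnegQuadratic p)
    (hmix : NoMixedTerms (Set.range g) B p) :
    ∃ (a : Fin n → ℝ) (l : Fin n → MvPolynomial σ ℝ) (r : MvPolynomial σ ℝ),
      (∀ i, 0 ≤ a i) ∧
      (∀ i, (l i).totalDegree ≤ 1 ∧ (l i).vars ⊆ p.vars ∧
        (∀ b ∈ B, b ∉ (l i).vars) ∧ ∀ i' ≤ i, g i' ∉ (l i).vars) ∧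
      IsNonnegQuadratic r ∧ r.vars ⊆ p.vars ∧ (∀ i, g i ∉ r.vars) ∧
      p = ∑ i, C (a i) * (X (g i) - l i) ^ 2 + r := by
  induction n generalizing p with
  | zero =>
    exact ⟨finZeroElim, finZeroElim, p, finZeroElim, finZeroElim, hp, subset_rfl, finZeroElim,
      by simp⟩
  | succ n ih =>
    have hw : g 0 ∈ Set.range g := ⟨0, rfl⟩
    obtain ⟨a, l, r, ha, hl, hr, hrp, hrg, heq⟩ := ih (fun i => g i.succ)
      (isNonnegQuadratic_squareRemainder hp (g 0))
      ((noMixedTerms_squareRemainder hmix hw).mono_left (Set.range_comp_subset_range _ _))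
    have hrem : (squareRemainder (g 0) p).vars ⊆ p.vars := vars_squareRemainder_subset.trans <|
      Finset.union_subset (vars_coeffInX_subset _) (vars_coeffInX_subset _)
    refine ⟨Fin.cons (coeff (Finsupp.single (g 0) 2) p) a, Fin.cons (squareVertex (g 0) p) l, r,
      Fin.cases (hp.coeff_single_two_nonneg _) ha, fun i => ?_, hr, hrp.trans hrem,
      Fin.cases (fun h => notMem_vars_squareRemainder (hrp h)) hrg, ?_⟩
    · cases i using Fin.cases with
      | zero =>
        refine ⟨totalDegree_squareVertex_le hp.totalDegree_le,
          vars_squareVertex_subset.trans (vars_coeffInX_subset _),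
          fun b hb => hmix.notMem_vars_squareVertex hw hb, fun i' hi' => ?_⟩
        rw [Fin.le_zero_iff.1 hi']
        exact notMem_vars_squareVertex
      | succ i =>
        obtain ⟨hldeg, hlvars, hlB, hlg⟩ := hl i
        refine ⟨hldeg, hlvars.trans hrem, hlB, Fin.cases (fun _ h => ?_) fun j hj => ?_⟩
        exacts [notMem_vars_squareRemainder (hlvars h), hlg j (Fin.succ_le_succ_iff.1 hj)]
    · conv_lhs => rw [hp.eq_C_mul_X_sub_squareVertex_sq_add (g 0), heq]
      rw [Fin.sum_univ_succ]
      simp only [Fin.cons_zero, Fin.cons_succ]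
      ring

end MvPolynomial

/-- Triangular decomposition of a quadratic SOS polynomial `h(x,y,z)` with no
mixed `yᵢ zⱼ` monomials:
`h = ∑ᵢ aᵢ (yᵢ − lᵢ(x, y₍>ᵢ₎))² + ∑ⱼ a₍ᵤ₊ⱼ₎ (zⱼ − l₍ᵤ₊ⱼ₎(x, z₍>ⱼ₎))²
   + ∑ₖ a₍ᵤ₊ᵥ₊ₖ₎ (xₖ − l₍ᵤ₊ᵥ₊ₖ₎(x₍>ₖ₎))² + a₀`
with nonnegative coefficients and affine forms `l` in the indicated variables. -/
theorem sos_triangular_form (d u v : ℕ)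
    (h : MvPolynomial (Fin d ⊕ Fin u ⊕ Fin v) ℝ)
    (hdeg : h.totalDegree ≤ 2) (hsos : IsSOS h)
    (hmixed : ∀ (i : Fin u) (j : Fin v),
      MvPolynomial.coeff
        (Finsupp.single (Sum.inr (Sum.inl i)) 1 + Finsupp.single (Sum.inr (Sum.inr j)) 1)
        h = 0) :
    ∃ (ay : Fin u → ℝ) (ly : Fin u → MvPolynomial (Fin d ⊕ Fin u ⊕ Fin v) ℝ)
      (az : Fin v → ℝ) (lz : Fin v → MvPolynomial (Fin d ⊕ Fin u ⊕ Fin v) ℝ)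
      (ax : Fin d → ℝ) (lx : Fin d → MvPolynomial (Fin d ⊕ Fin u ⊕ Fin v) ℝ)
      (a0 : ℝ),
      (∀ i, 0 ≤ ay i) ∧ (∀ j, 0 ≤ az j) ∧ (∀ k, 0 ≤ ax k) ∧ 0 ≤ a0 ∧
      (∀ i, (ly i).totalDegree ≤ 1 ∧
        ∀ w ∈ (ly i).vars, (∃ k : Fin d, w = Sum.inl k) ∨
          (∃ i' : Fin u, i < i' ∧ w = Sum.inr (Sum.inl i'))) ∧
      (∀ j, (lz j).totalDegree ≤ 1 ∧
        ∀ w ∈ (lz j).vars, (∃ k : Fin d, w = Sum.inl k) ∨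
          (∃ j' : Fin v, j < j' ∧ w = Sum.inr (Sum.inr j'))) ∧
      (∀ k, (lx k).totalDegree ≤ 1 ∧
        ∀ w ∈ (lx k).vars, ∃ k' : Fin d, k < k' ∧ w = Sum.inl k') ∧
      h = (∑ i, MvPolynomial.C (ay i) * (MvPolynomial.X (Sum.inr (Sum.inl i)) - ly i) ^ 2)
        + (∑ j, MvPolynomial.C (az j) * (MvPolynomial.X (Sum.inr (Sum.inr j)) - lz j) ^ 2)
        + (∑ k, MvPolynomial.C (ax k) * (MvPolynomial.X (Sum.inl k) - lx k) ^ 2)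
        + MvPolynomial.C a0 := by
  set Y : Set (Fin d ⊕ Fin u ⊕ Fin v) := Set.range fun i => Sum.inr (Sum.inl i)
  set Z : Set (Fin d ⊕ Fin u ⊕ Fin v) := Set.range fun j => Sum.inr (Sum.inr j)
  have hYZ : Disjoint Y Z := Set.disjoint_left.2 <| by rintro _ ⟨i, rfl⟩ ⟨j, hj⟩; cases hj
  obtain ⟨ay, ly, r₁, hay, hly, hr₁, -, hr₁Y, rfl⟩ :=
    IsNonnegQuadratic.exists_eq_sum_sq_add (B := Z) (fun i => Sum.inr (Sum.inl i))
      ⟨hdeg, hsos.eval_nonneg⟩ <| noMixedTerms_of_coeff_eq_zero hdeg hYZ <| by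
        rintro _ ⟨i, rfl⟩ _ ⟨j, rfl⟩; exact hmixed i j
  obtain ⟨az, lz, r₂, haz, hlz, hr₂, hr₂r₁, hr₂Z, rfl⟩ :=
    hr₁.exists_eq_sum_sq_add (B := Y) (fun j => Sum.inr (Sum.inr j)) <|
      noMixedTerms_of_forall_notMem_vars <| by rintro _ ⟨i, rfl⟩; exact hr₁Y i
  obtain ⟨ax, lx, r₃, hax, hlx, hr₃, hr₃r₂, hr₃X, rfl⟩ :=
    hr₂.exists_eq_sum_sq_add (B := Y ∪ Z) Sum.inl <| noMixedTerms_of_forall_notMem_vars <| by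
      rintro _ (⟨i, rfl⟩ | ⟨j, rfl⟩)
      exacts [fun h => hr₁Y i (hr₂r₁ h), hr₂Z j]
  have hr₃C : r₃ = C (coeff 0 r₃) :=
    vars_eq_empty_iff_eq_C.1 <| Finset.eq_empty_of_forall_notMem <| by
    rintro (k | i | j) h
    exacts [hr₃X k h, hr₁Y i (hr₂r₁ (hr₃r₂ h)), hr₂Z j (hr₃r₂ h)]
  refine ⟨ay, ly, az, lz, ax, lx, coeff 0 r₃, hay, haz, hax, ?_, fun i => ⟨(hly i).1, ?_⟩,
    fun j => ⟨(hlz j).1, ?_⟩, fun k => ⟨(hlx k).1, ?_⟩, ?_⟩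
  · simpa [← hr₃C, constantCoeff] using hr₃.nonneg 0
  · rintro (k | i' | j) hw
    exacts [.inl ⟨k, rfl⟩, .inr ⟨i', lt_of_not_ge fun hle => (hly i).2.2.2 i' hle hw, rfl⟩,
      absurd hw ((hly i).2.2.1 _ ⟨j, rfl⟩)]
  · rintro (k | i | j') hw
    exacts [.inl ⟨k, rfl⟩, absurd hw ((hlz j).2.2.1 _ ⟨i, rfl⟩),
      .inr ⟨j', lt_of_not_ge fun hle => (hlz j).2.2.2 j' hle hw, rfl⟩]
  · rintro (k' | i | j) hw
    exacts [⟨k', lt_of_not_ge fun hle => (hlx k).2.2.2 k' hle hw, rfl⟩,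
      absurd hw ((hlx k).2.2.1 _ (.inl ⟨i, rfl⟩)),
      absurd hw ((hlx k).2.2.1 _ (.inr ⟨j, rfl⟩))]
  · rw [← hr₃C]
    ring
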